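/- arXiv:1812.11814 — 2 statements merged into one kernel-verified Lean document; each statement's English description precedes it below -/
import Mathlib

section
/- Let ρ, ε, M be positive real numbers and let φ be a holomorphic function on the polydisc D = {(x, v) ∈ ℂ² : |x| < ρ, |v| < ε} with |φ(x, v)| ≤ M on D, φ(0, 0) = 0 and (∂φ/∂v)(0, 0) = 0. Then there exists a unique holomorphic function v defined on the disc {x ∈ ℂ : |x| < ρ·(ε/(ε + 2M))²} such that v(0) = 0, |v(x)| < ε for all x in this disc, and v(x) = φ(x, v(x)) for all x in this disc. -/
/-!
Fix `x`. Expanding `v ↦ φ (x, v)` in its Taylor series at `0` and using Cauchy's estimates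
`‖aₙ‖ ≤ M / εⁿ` bounds the remainder after the linear term, together with its Lipschitz constant
on small discs. The constant and linear coefficients `φ (x, 0)` and `∂φ/∂v (x, 0)` vanish at
`x = 0` and are holomorphic in `x`, so the Schwarz lemma bounds them by `M ‖x‖ / ρ` and
`(M / ε) ‖x‖ / ρ`. For `‖x‖ < ρ (ε / (ε + 2M))²` and `t = ε² / (2 (ε + M))` these bounds make
`φ (x, ·)` a contraction of the closed disc of radius `t`, uniformly in `x`. The Picard iterates are
holomorphic in `x` and converge uniformly, so the fixed point is holomorphic. Another holomorphic
solution vanishing at `0` stays in the disc of radius `t` near `0`, hence agrees with it there and,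
by the identity theorem, everywhere.
-/

open Metric Set Filter Function Topology
open scoped NNReal

theorem tendstoUniformlyOn_of_dist_le {ι α β : Type*} [PseudoMetricSpace β] {F : ι → α → β}
    {f : α → β} {p : Filter ι} {s : Set α} {b : ι → ℝ} (hb : Tendsto b p (𝓝 0))
    (h : ∀ᶠ i in p, ∀ x ∈ s, dist (f x) (F i x) ≤ b i) : TendstoUniformlyOn F f p s :=
  Metric.tendstoUniformlyOn_iff.2 fun _ hη =>
    (h.and (hb.eventually (gt_mem_nhds hη))).mono fun _ hi x hx => (hi.1 x hx).trans_lt hi.2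

theorem LipschitzOnWith.dist_iterate_succ_le_geometric {α : Type*} [PseudoMetricSpace α]
    {f : α → α} {s : Set α} {K : ℝ≥0} (hf : LipschitzOnWith K f s) (hfs : MapsTo f s s)
    {x : α} (hx : x ∈ s) (n : ℕ) : dist (f^[n] x) (f^[n + 1] x) ≤ dist x (f x) * K ^ n := by
  simpa [hfs.iterate_restrict, Subtype.dist_eq] using
    (hf.mapsToRestrict hfs).dist_iterate_succ_le_geometric ⟨x, hx⟩ n

theorem IsClosed.isFixedPt_of_tendsto_iterate {α : Type*} [TopologicalSpace α] [T2Space α]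
    {f : α → α} {s : Set α} (hs : IsClosed s) (hfs : MapsTo f s s) (hf : ContinuousOn f s)
    {x y : α} (hx : x ∈ s) (hy : Tendsto (fun n => f^[n] x) atTop (𝓝 y)) :
    y ∈ s ∧ IsFixedPt f y := by
  have hys : y ∈ s := hs.mem_of_tendsto hy (Eventually.of_forall fun n => hfs.iterate n hx)
  refine ⟨hys, tendsto_nhds_unique ((tendsto_add_atTop_iff_nat 1).1 ?_) hy⟩
  simp only [iterate_succ']
  exact (hf y hys).tendsto.comp
    (tendsto_nhdsWithin_iff.2 ⟨hy, Eventually.of_forall fun n => hfs.iterate n hx⟩)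

theorem LipschitzOnWith.eq_of_isFixedPt {α : Type*} [MetricSpace α] {f : α → α} {s : Set α}
    {K : ℝ≥0} (hf : LipschitzOnWith K f s) (hK : K < 1) {a b : α} (ha : a ∈ s) (hb : b ∈ s)
    (hfa : IsFixedPt f a) (hfb : IsFixedPt f b) : a = b := by
  have h := hf.dist_le_mul a ha b hb
  rw [hfa, hfb] at h
  have hK' : (K : ℝ) < 1 := hK
  exact dist_le_zero.1 (by nlinarith [dist_nonneg (x := a) (y := b)])

theorem norm_pow_sub_pow_le {𝕜 : Type*} [RCLike 𝕜] {t : ℝ} {u w : 𝕜} (hu : ‖u‖ ≤ t) (hw : ‖w‖ ≤ t)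
    (n : ℕ) : ‖u ^ n - w ^ n‖ ≤ n * t ^ (n - 1) * ‖u - w‖ := by
  refine (convex_closedBall (0 : 𝕜) t).norm_image_sub_le_of_norm_deriv_le (f := fun z => z ^ n)
    (fun z _ => differentiableAt_pow n) (fun z hz => ?_) (mem_closedBall_zero_iff.2 hw)
    (mem_closedBall_zero_iff.2 hu)
  rw [deriv_pow_field, norm_mul, norm_pow, RCLike.norm_natCast]
  gcongr
  exact mem_closedBall_zero_iff.1 hz

section TaylorRemainder

variable {E : Type*} [NormedAddCommGroup E] [NormedSpace ℂ E] [CompleteSpace E]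
  {f : ℂ → E} {ε M t : ℝ}

theorem norm_iteratedDeriv_le_of_forall_mem_ball_norm_le (hε : 0 < ε)
    (hf : DifferentiableOn ℂ f (ball 0 ε)) (hb : ∀ z ∈ ball 0 ε, ‖f z‖ ≤ M) (n : ℕ) :
    ‖iteratedDeriv n f 0‖ ≤ n.factorial * M / ε ^ n := by
  have hlim : Tendsto (fun R : ℝ => n.factorial * M / R ^ n) (𝓝[<] ε)
      (𝓝 (n.factorial * M / ε ^ n)) :=
    (continuousAt_const.div (continuous_pow n).continuousAt
      (pow_ne_zero n hε.ne')).tendsto.mono_left nhdsWithin_le_nhds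
  refine ge_of_tendsto hlim ?_
  filter_upwards [Ioo_mem_nhdsLT hε] with R ⟨hR0, hRε⟩
  exact Complex.norm_iteratedDeriv_le_of_forall_mem_sphere_norm_le n hR0
    (hf.diffContOnCl_ball (closedBall_subset_ball hRε))
    fun z hz => hb z (sphere_subset_closedBall.trans (closedBall_subset_ball hRε) hz)

theorem norm_taylorTerm_le (hε : 0 < ε)
    (hf : DifferentiableOn ℂ f (ball 0 ε)) (hb : ∀ z ∈ ball 0 ε, ‖f z‖ ≤ M) (n : ℕ) (z : ℂ) :
    ‖(n.factorial : ℂ)⁻¹ • z ^ n • iteratedDeriv n f 0‖ ≤ M * (‖z‖ / ε) ^ n := by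
  rw [norm_smul, norm_smul, norm_inv, Complex.norm_natCast, norm_pow, div_pow]
  calc (n.factorial : ℝ)⁻¹ * (‖z‖ ^ n * ‖iteratedDeriv n f 0‖)
      ≤ (n.factorial : ℝ)⁻¹ * (‖z‖ ^ n * (n.factorial * M / ε ^ n)) := by
        gcongr; exact norm_iteratedDeriv_le_of_forall_mem_ball_norm_le hε hf hb n
    _ = M * (‖z‖ ^ n / ε ^ n) := by field_simp

theorem hasSum_taylorRemainder (hf : DifferentiableOn ℂ f (ball 0 ε)) {z : ℂ} (hz : ‖z‖ < ε) :
    HasSum (fun n => ((n + 2).factorial : ℂ)⁻¹ • z ^ (n + 2) • iteratedDeriv (n + 2) f 0)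
      (f z - f 0 - z • deriv f 0) := by
  simpa [Finset.sum_range_succ, sub_sub] using
    (hasSum_nat_add_iff' 2).2 (Complex.hasSum_taylorSeries_on_ball hf (mem_ball_zero_iff.2 hz))

theorem norm_sub_sub_smul_deriv_le (hε : 0 < ε)
    (hf : DifferentiableOn ℂ f (ball 0 ε)) (hb : ∀ z ∈ ball 0 ε, ‖f z‖ ≤ M) (ht : t < ε)
    {z : ℂ} (hz : ‖z‖ ≤ t) :
    ‖f z - f 0 - z • deriv f 0‖ ≤ M * (t / ε) ^ 2 * (1 - t / ε)⁻¹ := by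
  have hM : 0 ≤ M := (norm_nonneg _).trans (hb 0 (mem_ball_self hε))
  have hq0 : 0 ≤ t / ε := div_nonneg ((norm_nonneg z).trans hz) hε.le
  have hq1 : t / ε < 1 := (div_lt_one hε).2 ht
  refine (hasSum_taylorRemainder hf (hz.trans_lt ht)).norm_le_of_bounded
    ((hasSum_geometric_of_lt_one hq0 hq1).mul_left (M * (t / ε) ^ 2)) fun n => ?_
  calc _ ≤ M * (‖z‖ / ε) ^ (n + 2) := norm_taylorTerm_le hε hf hb (n + 2) z
    _ ≤ M * (t / ε) ^ (n + 2) := by gcongr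
    _ = M * (t / ε) ^ 2 * (t / ε) ^ n := by ring

theorem norm_sub_smul_deriv_sub_le (hε : 0 < ε)
    (hf : DifferentiableOn ℂ f (ball 0 ε)) (hb : ∀ z ∈ ball 0 ε, ‖f z‖ ≤ M) (ht : t < ε)
    {u w : ℂ} (hu : ‖u‖ ≤ t) (hw : ‖w‖ ≤ t) :
    ‖(f u - u • deriv f 0) - (f w - w • deriv f 0)‖ ≤
      M / ε * (1 / (1 - t / ε) ^ 2 - 1) * ‖u - w‖ := by
  have hM : 0 ≤ M := (norm_nonneg _).trans (hb 0 (mem_ball_self hε))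
  have ht0 : 0 ≤ t := (norm_nonneg u).trans hu
  set q := t / ε with hq
  have hq0 : 0 ≤ q := by positivity
  have hq1 : ‖q‖ < 1 := by rw [Real.norm_of_nonneg hq0]; exact (div_lt_one hε).2 ht
  have hgeom : HasSum (fun n : ℕ => ((n + 2 : ℕ) : ℝ) * q ^ (n + 1)) (1 / (1 - q) ^ 2 - 1) := by
    have h := hasSum_choose_mul_geometric_of_norm_lt_one 1 hq1
    rw [← hasSum_nat_add_iff' 1] at h
    simpa [Nat.choose_one_right, add_assoc] using h
  have hdiff := (hasSum_taylorRemainder hf (hu.trans_lt ht)).sub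
    (hasSum_taylorRemainder hf (hw.trans_lt ht))
  rw [show f u - f 0 - u • deriv f 0 - (f w - f 0 - w • deriv f 0) =
    (f u - u • deriv f 0) - (f w - w • deriv f 0) by abel] at hdiff
  refine (hdiff.norm_le_of_bounded (hgeom.mul_left (M / ε * ‖u - w‖)) fun n => ?_).trans_eq
    (by ring)
  rw [← smul_sub, ← sub_smul, norm_smul, norm_smul, norm_inv, Complex.norm_natCast]
  calc ((n + 2).factorial : ℝ)⁻¹ * (‖u ^ (n + 2) - w ^ (n + 2)‖ * ‖iteratedDeriv (n + 2) f 0‖)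
      ≤ ((n + 2).factorial : ℝ)⁻¹ * (((n + 2 : ℕ) * t ^ (n + 1) * ‖u - w‖) *
          ((n + 2).factorial * M / ε ^ (n + 2))) := by
        gcongr ?_ * (?_ * ?_)
        · exact norm_pow_sub_pow_le hu hw (n + 2)
        · exact norm_iteratedDeriv_le_of_forall_mem_ball_norm_le hε hf hb (n + 2)
    _ = M / ε * ‖u - w‖ * (((n + 2 : ℕ) : ℝ) * q ^ (n + 1)) := by
        rw [hq, div_pow]; field_simp; ring

theorem mapsTo_closedBall_of_norm_le (hε : 0 < ε)
    (hf : DifferentiableOn ℂ f (ball 0 ε)) (hb : ∀ z ∈ ball 0 ε, ‖f z‖ ≤ M) (ht : t < ε)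
    (hself : ‖f 0‖ + t * ‖deriv f 0‖ + M * (t / ε) ^ 2 * (1 - t / ε)⁻¹ ≤ t) :
    MapsTo f (closedBall 0 t) (closedBall 0 t) := by
  intro z hz
  rw [mem_closedBall_zero_iff] at hz ⊢
  calc ‖f z‖ = ‖f 0 + z • deriv f 0 + (f z - f 0 - z • deriv f 0)‖ := by congr 1; abel
    _ ≤ ‖f 0‖ + ‖z‖ * ‖deriv f 0‖ + ‖f z - f 0 - z • deriv f 0‖ := by
        rw [← norm_smul]; exact norm_add₃_le
    _ ≤ ‖f 0‖ + t * ‖deriv f 0‖ + M * (t / ε) ^ 2 * (1 - t / ε)⁻¹ := by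
        gcongr; exact norm_sub_sub_smul_deriv_le hε hf hb ht hz
    _ ≤ t := hself

theorem lipschitzOnWith_closedBall (hε : 0 < ε)
    (hf : DifferentiableOn ℂ f (ball 0 ε)) (hb : ∀ z ∈ ball 0 ε, ‖f z‖ ≤ M) (ht : t < ε) :
    LipschitzOnWith (‖deriv f 0‖ + M / ε * (1 / (1 - t / ε) ^ 2 - 1)).toNNReal f
      (closedBall 0 t) := by
  refine LipschitzOnWith.of_dist_le' fun u hu w hw => ?_
  rw [mem_closedBall_zero_iff] at hu hw
  rw [dist_eq_norm, dist_eq_norm]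
  calc ‖f u - f w‖ = ‖(u - w) • deriv f 0 + ((f u - u • deriv f 0) - (f w - w • deriv f 0))‖ := by
        congr 1; rw [sub_smul]; abel
    _ ≤ ‖u - w‖ * ‖deriv f 0‖ + M / ε * (1 / (1 - t / ε) ^ 2 - 1) * ‖u - w‖ := by
        rw [← norm_smul]
        refine (norm_add_le _ _).trans ?_
        gcongr
        exact norm_sub_smul_deriv_sub_le hε hf hb ht hu hw
    _ = (‖deriv f 0‖ + M / ε * (1 / (1 - t / ε) ^ 2 - 1)) * ‖u - w‖ := by ring

end TaylorRemainder

theorem norm_le_div_mul_norm_of_forall_norm_le {E : Type*} [NormedAddCommGroup E]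
    [NormedSpace ℂ E] {f : ℂ → E} {ρ C : ℝ} (hf : DifferentiableOn ℂ f (ball 0 ρ))
    (hb : ∀ z ∈ ball 0 ρ, ‖f z‖ ≤ C) (h0 : f 0 = 0) {z : ℂ} (hz : z ∈ ball 0 ρ) :
    ‖f z‖ ≤ C / ρ * ‖z‖ := by
  simpa [h0] using Complex.dist_le_div_mul_dist_of_mapsTo_ball hf
    (fun w hw => by simpa [h0] using hb w hw) hz

section Slices

variable {E : Type*} [NormedAddCommGroup E] [NormedSpace ℂ E] {φ : ℂ × ℂ → E}
  {U V : Set ℂ} {ε M : ℝ}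

theorem DifferentiableOn.slice_left (hφ : DifferentiableOn ℂ φ (U ×ˢ V)) {v : ℂ} (hv : v ∈ V) :
    DifferentiableOn ℂ (fun x => φ (x, v)) U :=
  hφ.comp (differentiableOn_id.prodMk (differentiableOn_const v)) fun _ hx => ⟨hx, hv⟩

theorem DifferentiableOn.slice_right (hφ : DifferentiableOn ℂ φ (U ×ˢ V)) {x : ℂ} (hx : x ∈ U) :
    DifferentiableOn ℂ (fun v => φ (x, v)) V :=
  hφ.comp ((differentiableOn_const x).prodMk differentiableOn_id) fun _ hv => ⟨hx, hv⟩

/-- The difference quotients `(φ(x, u) - φ(x, 0)) / u` converge to `∂φ/∂v (x, 0)` uniformly in `x`,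
by the uniform Taylor remainder bound. -/
theorem differentiableOn_deriv_slice [CompleteSpace E] (hU : IsOpen U) (hε : 0 < ε)
    (hφ : DifferentiableOn ℂ φ (U ×ˢ ball 0 ε)) (hb : ∀ p ∈ U ×ˢ ball 0 ε, ‖φ p‖ ≤ M) :
    DifferentiableOn ℂ (fun x => deriv (fun v => φ (x, v)) 0) U := by
  set F : ℂ → ℂ → E := fun u x => u⁻¹ • (φ (x, u) - φ (x, 0))
  have hF : ∀ᶠ u in 𝓝[≠] 0, DifferentiableOn ℂ (F u) U := by
    filter_upwards [nhdsWithin_le_nhds (ball_mem_nhds 0 hε)] with u hu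
    exact ((hφ.slice_left hu).sub (hφ.slice_left (mem_ball_self hε))).const_smul u⁻¹
  set b : ℂ → ℝ := fun u => M * ‖u‖ / (ε * (ε - ‖u‖))
  have hb0 : Tendsto b (𝓝[≠] 0) (𝓝 0) := by
    have : ContinuousAt b 0 :=
      ContinuousAt.div (by fun_prop) (by fun_prop) (by simpa using hε.ne')
    simpa [b] using this.tendsto.mono_left nhdsWithin_le_nhds
  refine (tendstoUniformlyOn_of_dist_le hb0 ?_).tendstoLocallyUniformlyOn.differentiableOn hF hU
  filter_upwards [self_mem_nhdsWithin, nhdsWithin_le_nhds (ball_mem_nhds 0 hε)] with u hu0 hu x hx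
  have hu' : ‖u‖ < ε := mem_ball_zero_iff.1 hu
  have hu0' : 0 < ‖u‖ := norm_pos_iff.2 hu0
  have hrem :=
    norm_sub_sub_smul_deriv_le hε (hφ.slice_right hx) (fun v hv => hb _ ⟨hx, hv⟩) hu' le_rfl
  have heq : deriv (fun v => φ (x, v)) 0 - F u x =
      -(u⁻¹ • (φ (x, u) - φ (x, 0) - u • deriv (fun v => φ (x, v)) 0)) := by
    simp only [F, smul_sub, smul_smul, inv_mul_cancel₀ hu0, one_smul]; abel
  rw [dist_eq_norm, heq, norm_neg, norm_smul, norm_inv]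
  calc ‖u‖⁻¹ * ‖φ (x, u) - φ (x, 0) - u • deriv (fun v => φ (x, v)) 0‖
      ≤ ‖u‖⁻¹ * (M * (‖u‖ / ε) ^ 2 * (1 - ‖u‖ / ε)⁻¹) := by gcongr
    _ = b u := by
        have : ε - ‖u‖ ≠ 0 := by linarith
        simp only [b]; field_simp

end Slices

section ParametrizedFixedPoint

variable {E : Type*} [NormedAddCommGroup E] [NormedSpace ℂ E] [CompleteSpace E]
  {U : Set ℂ} {φ : ℂ × E → E} {t : ℝ} {K : ℝ≥0}

/-- The Picard iterates `x ↦ (φ (x, ·))^[n] 0` are holomorphic and converge uniformly. -/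
theorem exists_differentiableOn_isFixedPt (hU : IsOpen U) (ht : 0 ≤ t) (hK : K < 1)
    (hφ : DifferentiableOn ℂ φ (U ×ˢ closedBall 0 t))
    (hmaps : ∀ x ∈ U, MapsTo (fun v => φ (x, v)) (closedBall 0 t) (closedBall 0 t))
    (hlip : ∀ x ∈ U, LipschitzOnWith K (fun v => φ (x, v)) (closedBall 0 t)) :
    ∃ v : ℂ → E, DifferentiableOn ℂ v U ∧
      ∀ x ∈ U, v x ∈ closedBall 0 t ∧ IsFixedPt (fun w => φ (x, w)) (v x) := by
  set P : ℕ → ℂ → E := fun n x => (fun w => φ (x, w))^[n] 0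
  have hP_mem (n : ℕ) {x : ℂ} (hx : x ∈ U) : P n x ∈ closedBall 0 t :=
    (hmaps x hx).iterate n (mem_closedBall_self ht)
  have hP_diff (n : ℕ) : DifferentiableOn ℂ (P n) U := by
    induction n with
    | zero => exact differentiableOn_const 0
    | succ n ih =>
      simp only [P, iterate_succ_apply']
      exact hφ.comp (differentiableOn_id.prodMk ih) fun x hx => ⟨hx, hP_mem n hx⟩
  have hP_step {x : ℂ} (hx : x ∈ U) (n : ℕ) : dist (P n x) (P (n + 1) x) ≤ t * K ^ n := by
    refine ((hlip x hx).dist_iterate_succ_le_geometric (hmaps x hx)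
      (mem_closedBall_self ht) n).trans ?_
    gcongr
    simpa [dist_zero_left] using hmaps x hx (mem_closedBall_self ht)
  set v : ℂ → E := fun x => limUnder atTop (fun n => P n x)
  have hP_lim {x : ℂ} (hx : x ∈ U) : Tendsto (fun n => P n x) atTop (𝓝 (v x)) :=
    (cauchySeq_of_le_geometric _ _ hK (hP_step hx)).tendsto_limUnder
  have hP_unif : TendstoUniformlyOn P v atTop U := by
    refine tendstoUniformlyOn_of_dist_le (b := fun n => t * K ^ n / (1 - K)) ?_
      (Eventually.of_forall fun n x hx => ?_)
    · simpa using ((tendsto_pow_atTop_nhds_zero_of_lt_one K.2 hK).const_mul t).div_const (1 - K)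
    · rw [dist_comm]
      exact dist_le_of_le_geometric_of_tendsto _ _ hK (hP_step hx) (hP_lim hx) n
  refine ⟨v, hP_unif.tendstoLocallyUniformlyOn.differentiableOn (Eventually.of_forall hP_diff) hU,
    fun x hx => ?_⟩
  exact isClosed_closedBall.isFixedPt_of_tendsto_iterate (hmaps x hx) (hlip x hx).continuousOn
    (mem_closedBall_self ht) (hP_lim hx)

/-- Near `x₀`, `w` stays in the ball where fixed points are unique, so it agrees with `v` there;
the identity theorem does the rest. -/
theorem eqOn_of_isFixedPt (hU : IsOpen U) (hUc : IsPreconnected U) {x₀ : ℂ} (hx₀ : x₀ ∈ U)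
    (hK : K < 1) (hlip : ∀ x ∈ U, LipschitzOnWith K (fun v => φ (x, v)) (closedBall 0 t))
    {v w : ℂ → E} (hv : DifferentiableOn ℂ v U) (hw : DifferentiableOn ℂ w U)
    (hvfix : ∀ x ∈ U, v x ∈ closedBall 0 t ∧ IsFixedPt (fun u => φ (x, u)) (v x))
    (hwfix : ∀ x ∈ U, IsFixedPt (fun u => φ (x, u)) (w x)) (hw₀ : w x₀ ∈ ball 0 t) :
    EqOn w v U := by
  have hwc : ContinuousAt w x₀ := (hw.differentiableAt (hU.mem_nhds hx₀)).continuousAt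
  have hev : w =ᶠ[𝓝 x₀] v := by
    filter_upwards [hwc.preimage_mem_nhds (isOpen_ball.mem_nhds hw₀), hU.mem_nhds hx₀]
      with x hxw hx
    exact (hlip x hx).eq_of_isFixedPt hK (ball_subset_closedBall hxw) (hvfix x hx).1
      (hwfix x hx) (hvfix x hx).2
  exact (hw.analyticOnNhd hU).eqOn_of_preconnected_of_eventuallyEq (hv.analyticOnNhd hU) hUc hx₀ hev

end ParametrizedFixedPoint

/-- With `t / ε = ε / (2 (ε + M))` the contraction constant is `4 M (ε + M) / (ε + 2 M) ^ 2`,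
which is `< 1` since `(ε + 2 M) ^ 2 = ε ^ 2 + 4 M (ε + M)`. -/
theorem implicitFunction_constants {ε M δ t : ℝ} (hε : 0 < ε) (hM : 0 ≤ M)
    (hδ : δ = ε / (ε + 2 * M)) (ht : t = ε ^ 2 / (2 * (ε + M))) :
    δ ^ 2 ≤ 1 ∧ 0 < t ∧ t < ε ∧
      M * δ ^ 2 + t * (M / ε * δ ^ 2) + M * (t / ε) ^ 2 * (1 - t / ε)⁻¹ ≤ t ∧
      M / ε * δ ^ 2 + M / ε * (1 / (1 - t / ε) ^ 2 - 1) < 1 := by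
  have hq : t / ε = ε / (2 * (ε + M)) := by rw [ht]; field_simp
  have h1q : 1 - t / ε = (ε + 2 * M) / (2 * (ε + M)) := by rw [hq]; field_simp; ring
  rw [h1q, hq, hδ, ht]
  refine ⟨?_, by positivity, ?_, ?_, ?_⟩
  · rw [div_pow, div_le_one (by positivity)]; nlinarith
  · rw [div_lt_iff₀ (by positivity)]; nlinarith
  · have : ε ^ 2 / (2 * (ε + M)) - (M * (ε / (ε + 2 * M)) ^ 2 +
        ε ^ 2 / (2 * (ε + M)) * (M / ε * (ε / (ε + 2 * M)) ^ 2) +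
        M * (ε / (2 * (ε + M))) ^ 2 * ((ε + 2 * M) / (2 * (ε + M)))⁻¹) =
        ε ^ 4 / (2 * (ε + M) * (ε + 2 * M) ^ 2) := by
      field_simp; ring
    have : 0 < ε ^ 4 / (2 * (ε + M) * (ε + 2 * M) ^ 2) := by positivity
    linarith
  · have : M / ε * (ε / (ε + 2 * M)) ^ 2 + M / ε * (1 / ((ε + 2 * M) / (2 * (ε + M))) ^ 2 - 1) =
        1 - ε ^ 2 / (ε + 2 * M) ^ 2 := by
      field_simp; ring
    have : 0 < ε ^ 2 / (ε + 2 * M) ^ 2 := by positivity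
    linarith

theorem exists_lipschitzOnWith_slice {φ : ℂ × ℂ → ℂ} {ρ ε M : ℝ} (hρ : 0 < ρ) (hε : 0 < ε)
    (hM : 0 ≤ M) (hφ : DifferentiableOn ℂ φ (ball 0 ρ ×ˢ ball 0 ε))
    (hb : ∀ p ∈ ball 0 ρ ×ˢ ball 0 ε, ‖φ p‖ ≤ M) (h00 : φ (0, 0) = 0)
    (hdv : deriv (fun v => φ (0, v)) 0 = 0) :
    ∃ K : ℝ≥0, K < 1 ∧ ∀ x ∈ ball (0 : ℂ) (ρ * (ε / (ε + 2 * M)) ^ 2),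
      MapsTo (fun v => φ (x, v)) (closedBall 0 (ε ^ 2 / (2 * (ε + M))))
        (closedBall 0 (ε ^ 2 / (2 * (ε + M)))) ∧
      LipschitzOnWith K (fun v => φ (x, v)) (closedBall 0 (ε ^ 2 / (2 * (ε + M)))) := by
  set δ := ε / (ε + 2 * M) with hδ
  set t := ε ^ 2 / (2 * (ε + M)) with ht
  obtain ⟨hδ1, -, htε, hself, hcontr⟩ := implicitFunction_constants hε hM hδ ht
  set g : ℂ → ℂ := fun x => deriv (fun v => φ (x, v)) 0
  have hbx {x : ℂ} (hx : x ∈ ball 0 ρ) : ∀ v ∈ ball 0 ε, ‖φ (x, v)‖ ≤ M :=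
    fun v hv => hb _ ⟨hx, hv⟩
  have hschwarz {f : ℂ → ℂ} {C : ℝ} (hf : DifferentiableOn ℂ f (ball 0 ρ))
      (hfb : ∀ z ∈ ball 0 ρ, ‖f z‖ ≤ C) (hf0 : f 0 = 0) {x : ℂ}
      (hx : x ∈ ball (0 : ℂ) (ρ * δ ^ 2)) : ‖f x‖ ≤ C * δ ^ 2 := by
    have hC : 0 ≤ C := (norm_nonneg _).trans (hfb 0 (mem_ball_self hρ))
    calc ‖f x‖ ≤ C / ρ * ‖x‖ :=
          norm_le_div_mul_norm_of_forall_norm_le hf hfb hf0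
            (ball_subset_ball (mul_le_of_le_one_right hρ.le hδ1) hx)
      _ ≤ C / ρ * (ρ * δ ^ 2) := by gcongr; exact (mem_ball_zero_iff.1 hx).le
      _ = C * δ ^ 2 := by field_simp
  have hg : DifferentiableOn ℂ g (ball 0 ρ) := differentiableOn_deriv_slice isOpen_ball hε hφ hb
  have hgb (x : ℂ) (hx : x ∈ ball 0 ρ) : ‖g x‖ ≤ M / ε := by
    simpa using norm_iteratedDeriv_le_of_forall_mem_ball_norm_le hε (hφ.slice_right hx) (hbx hx) 1
  refine ⟨(M / ε * δ ^ 2 + M / ε * (1 / (1 - t / ε) ^ 2 - 1)).toNNReal,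
    Real.toNNReal_lt_one.2 hcontr, fun x hx => ?_⟩
  have hxρ : x ∈ ball 0 ρ := ball_subset_ball (mul_le_of_le_one_right hρ.le hδ1) hx
  have h0 : ‖φ (x, 0)‖ ≤ M * δ ^ 2 :=
    hschwarz (hφ.slice_left (mem_ball_self hε)) (fun z hz => hb _ ⟨hz, mem_ball_self hε⟩) h00 hx
  have h1 : ‖g x‖ ≤ M / ε * δ ^ 2 := hschwarz hg hgb hdv hx
  refine ⟨mapsTo_closedBall_of_norm_le hε (hφ.slice_right hxρ) (hbx hxρ) htε ?_,
    (lipschitzOnWith_closedBall hε (hφ.slice_right hxρ) (hbx hxρ) htε).weaken ?_⟩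
  · refine le_trans ?_ hself
    gcongr
  · exact Real.toNNReal_le_toNNReal (by linarith)

/-- Quantitative implicit function theorem: if `φ` is holomorphic on the polydisc
`{|x| < ρ, |v| < ε}`, bounded by `M` there, with `φ(0,0) = 0` and `∂φ/∂v(0,0) = 0`,
then on the disc `{|x| < ρ (ε/(ε+2M))²}` there is a unique holomorphic function `v`
with `v(0) = 0`, `|v| < ε`, solving `v(x) = φ(x, v(x))`. -/
theorem quantitative_implicit_function_theorem
    (ρ ε M : ℝ) (hρ : 0 < ρ) (hε : 0 < ε) (hM : 0 < M)
    (φ : ℂ × ℂ → ℂ)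
    (hφ : DifferentiableOn ℂ φ {p : ℂ × ℂ | ‖p.1‖ < ρ ∧ ‖p.2‖ < ε})
    (hbound : ∀ p : ℂ × ℂ, ‖p.1‖ < ρ → ‖p.2‖ < ε → ‖φ p‖ ≤ M)
    (h00 : φ (0, 0) = 0)
    (hdv : deriv (fun v : ℂ => φ (0, v)) 0 = 0) :
    ∃ v : ℂ → ℂ,
      (DifferentiableOn ℂ v {x : ℂ | ‖x‖ < ρ * (ε / (ε + 2 * M)) ^ 2} ∧
        v 0 = 0 ∧
        ∀ x : ℂ, ‖x‖ < ρ * (ε / (ε + 2 * M)) ^ 2 →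
          ‖v x‖ < ε ∧ v x = φ (x, v x)) ∧
      ∀ w : ℂ → ℂ,
        (DifferentiableOn ℂ w {x : ℂ | ‖x‖ < ρ * (ε / (ε + 2 * M)) ^ 2} ∧
          w 0 = 0 ∧
          ∀ x : ℂ, ‖x‖ < ρ * (ε / (ε + 2 * M)) ^ 2 →
            ‖w x‖ < ε ∧ w x = φ (x, w x)) →
        ∀ x : ℂ, ‖x‖ < ρ * (ε / (ε + 2 * M)) ^ 2 → w x = v x := by
  have hpoly : {p : ℂ × ℂ | ‖p.1‖ < ρ ∧ ‖p.2‖ < ε} = ball 0 ρ ×ˢ ball 0 ε := by ext; simp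
  rw [hpoly] at hφ
  obtain ⟨hδ1, ht, htε, -, -⟩ := implicitFunction_constants hε hM.le rfl rfl
  obtain ⟨K, hK, hslice⟩ := exists_lipschitzOnWith_slice hρ hε hM.le hφ
    (fun p hp => hbound p (mem_ball_zero_iff.1 hp.1) (mem_ball_zero_iff.1 hp.2)) h00 hdv
  set r := ρ * (ε / (ε + 2 * M)) ^ 2
  set t := ε ^ 2 / (2 * (ε + M))
  have hr : 0 < r := by positivity
  obtain ⟨v, hv, hvfix⟩ := exists_differentiableOn_isFixedPt isOpen_ball ht.le hK
    (hφ.mono (prod_mono (ball_subset_ball (mul_le_of_le_one_right hρ.le hδ1))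
      (closedBall_subset_ball htε)))
    (fun x hx => (hslice x hx).1) (fun x hx => (hslice x hx).2)
  have hv0 : v 0 = 0 := (hslice 0 (mem_ball_self hr)).2.eq_of_isFixedPt hK
    (hvfix 0 (mem_ball_self hr)).1 (mem_closedBall_self ht.le) (hvfix 0 (mem_ball_self hr)).2 h00
  simp only [← mem_ball_zero_iff]
  refine ⟨v, ⟨hv, hv0, fun x hx => ⟨?_, (hvfix x hx).2.symm⟩⟩, ?_⟩
  · exact closedBall_subset_ball htε (hvfix x hx).1
  · rintro w ⟨hw, hw0, hwfix⟩ x hx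
    exact eqOn_of_isFixedPt isOpen_ball (convex_ball 0 r).isPreconnected (mem_ball_self hr) hK
      (fun x hx => (hslice x hx).2) hv hw hvfix (fun x hx => (hwfix x hx).2.symm)
      (by simpa [hw0] using ht) hx
end

section
/- Let σ > 0 be a real number, r a natural number, ĥ(t) = Σ_{s≥0} h_s t^s a formal power series in t with nonnegative real coefficients h_s ≥ 0, and M̃(t, x, v) = Σ_{(s,p,q)∈ℤ₊³} β_{spq} t^s x^p v^q a formal power series in three variables with nonnegative real coefficients β_{spq} ≥ 0. Then there exists a unique sequence (C_k)_{k≥1} of formal Laurent series in t over ℝ such that the formal power series V = Σ_{k≥1} C_k(t) x^k (an element of the ring of formal power series in x with formal Laurent series in t as coefficients) satisfies σ t^r V = t^{r+1} ĥ(t)·V + x·M̃(t, x, V), where M̃(t, x, V) denotes the substitution of V for v (well defined since V has no constant term in x). Moreover, for every k ≥ 1 the Laurent series C_k has order ≥ −kr (i.e. C_k(t) = t^{−ν_k} Σ_{ℓ≥0} C_{kℓ} t^ℓ with ν_k ≤ kr) and all of its coefficients C_{kℓ} are nonnegative. -/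
/-- The sequence `(C_k)` of formal Laurent series (with `C 0 = 0`, so that
`V = ∑_{k ≥ 1} C_k x^k`) solves the majorant algebraic equation
`σ t^r V = t^{r+1} ĥ(t) V + x M̃(t, x, V)`, expressed coefficientwise in `x`:
here `ĥ(t) = ∑_s h_s t^s`, `M̃(t,x,v) = ∑_{s,p,q} β_{spq} t^s x^p v^q`, and since
`V` has zero constant term in `x`, the coefficient of `x^k` in `x M̃(t,x,V)` is the
finite sum over `p, q < k` of `(∑_s β_{spq} t^s) · [x^{k-1-p}](V^q)`. -/
def SolvesMajorantEquation (σ : ℝ) (r : ℕ) (h : ℕ → ℝ) (β : ℕ → ℕ → ℕ → ℝ)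
    (C : ℕ → LaurentSeries ℝ) : Prop :=
  C 0 = 0 ∧
    ∀ k : ℕ,
      σ • ((HahnSeries.single (1 : ℤ) (1 : ℝ)) ^ r * C k) =
        (HahnSeries.single (1 : ℤ) (1 : ℝ)) ^ (r + 1) *
            HahnSeries.ofPowerSeries ℤ ℝ (PowerSeries.mk h) * C k +
          (if k = 0 then 0 else
            ∑ p ∈ Finset.range k, ∑ q ∈ Finset.range k,
              HahnSeries.ofPowerSeries ℤ ℝ (PowerSeries.mk fun s => β s p q) *
                PowerSeries.coeff (R := LaurentSeries ℝ) (k - 1 - p) ((PowerSeries.mk C) ^ q))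

/-!
Writing `t` for the Laurent variable, the coefficient of `x^k` in the equation reads
`(σ t^r - t^{r+1} ĥ(t)) C_k = F_k`, where `F_k` only involves `C_1, …, C_{k-1}`. Since
`σ t^r - t^{r+1} ĥ(t) = t^r (σ - t ĥ(t))` is nonzero, each `C_k` is determined by the previous
ones, which gives existence and uniqueness. The inverse of this factor is `t^{-r} (σ - t ĥ(t))⁻¹`,
and the power series `(σ - t ĥ(t))⁻¹` has nonnegative coefficients because all coefficients of
`σ - t ĥ(t)` beyond the constant one are `≤ 0`. Inductively `F_k` then has nonnegative
coefficients and order at least `-(k - 1) r`, so `C_k` has nonnegative coefficients and order at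
least `-k r`.
-/

theorem existsUnique_eq_of_causal {α : Type*} [Nonempty α] (G : ℕ → (ℕ → α) → α)
    (hG : ∀ k (C C' : ℕ → α), (∀ j < k, C j = C' j) → G k C = G k C') :
    ∃! C : ℕ → α, ∀ k, C k = G k C := by
  let C : ℕ → α := Nat.strongRec fun k C =>
    G k fun j => if hj : j < k then C j hj else Classical.arbitrary α
  have hC : ∀ k, C k = G k C := fun k => by
    rw [show C k = _ from Nat.strongRec_eq _ k]
    exact hG k _ _ fun j hj => dif_pos hj
  refine ⟨C, hC, fun C' hC' => funext fun k => ?_⟩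
  induction k using Nat.strong_induction_on with
  | _ k ih => rw [hC' k, hC k]; exact hG k _ _ ih

theorem PowerSeries.coeff_pow_congr {R : Type*} [CommSemiring R] {f g : PowerSeries R} {m : ℕ}
    (hfg : ∀ j ≤ m, coeff j f = coeff j g) (q : ℕ) : coeff m (f ^ q) = coeff m (g ^ q) := by
  have htrunc : trunc (m + 1) f = trunc (m + 1) g := by
    ext j
    rw [coeff_trunc, coeff_trunc]
    split_ifs with hj
    exacts [hfg j (Nat.lt_succ_iff.mp hj), rfl]
  have hcoeff (φ : PowerSeries R) :
      coeff m (φ ^ q) = (trunc (m + 1) ((trunc (m + 1) φ : PowerSeries R) ^ q)).coeff m := by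
    rw [trunc_trunc_pow, coeff_trunc, if_pos m.lt_succ_self]
  rw [hcoeff f, hcoeff g, htrunc]

theorem PowerSeries.coeff_inv_nonneg {k : Type*} [Field k] [LinearOrder k] [IsStrictOrderedRing k]
    {φ : PowerSeries k} (h0 : 0 < constantCoeff φ) (hφ : ∀ n, n ≠ 0 → coeff n φ ≤ 0)
    (n : ℕ) : 0 ≤ coeff n φ⁻¹ := by
  induction n using Nat.strong_induction_on with
  | _ n ih =>
    rw [coeff_inv]
    split_ifs with hn
    · exact inv_nonneg.mpr h0.le
    refine mul_nonneg_of_nonpos_of_nonpos (neg_nonpos.mpr (inv_nonneg.mpr h0.le))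
      (Finset.sum_nonpos fun ij hij => ?_)
    rw [Finset.HasAntidiagonal.mem_antidiagonal] at hij
    split_ifs with hlt
    · exact mul_nonpos_of_nonpos_of_nonneg (hφ _ (by omega)) (ih _ hlt)
    · exact le_rfl

namespace HahnSeries

section NonnegFrom

variable {Γ R : Type*} [LinearOrder Γ] [Semiring R] [PartialOrder R]

def NonnegFrom (n : Γ) (f : HahnSeries Γ R) : Prop :=
  (∀ g, 0 ≤ f.coeff g) ∧ (n : WithTop Γ) ≤ f.orderTop

theorem NonnegFrom.zero (n : Γ) : NonnegFrom n (0 : HahnSeries Γ R) :=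
  ⟨fun _ => le_rfl, by simp⟩

theorem NonnegFrom.mono {m n : Γ} (hmn : m ≤ n) {f : HahnSeries Γ R} (hf : NonnegFrom n f) :
    NonnegFrom m f :=
  ⟨hf.1, (WithTop.coe_le_coe.mpr hmn).trans hf.2⟩

theorem NonnegFrom.single {a : Γ} {c : R} (hc : 0 ≤ c) : NonnegFrom a (single a c) :=
  ⟨fun i => by rw [coeff_single]; split_ifs <;> simp [hc], orderTop_single_le⟩

variable [IsOrderedRing R]

theorem NonnegFrom.one [Zero Γ] : NonnegFrom 0 (1 : HahnSeries Γ R) := by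
  simpa only [← single_zero_one] using NonnegFrom.single zero_le_one

theorem NonnegFrom.add {n : Γ} {f g : HahnSeries Γ R} (hf : NonnegFrom n f)
    (hg : NonnegFrom n g) : NonnegFrom n (f + g) :=
  ⟨fun i => by simpa only [coeff_add] using add_nonneg (hf.1 i) (hg.1 i),
    (le_min hf.2 hg.2).trans min_orderTop_le_orderTop_add⟩

theorem NonnegFrom.sum {ι : Type*} {s : Finset ι} {n : Γ} {f : ι → HahnSeries Γ R}
    (hf : ∀ i ∈ s, NonnegFrom n (f i)) : NonnegFrom n (∑ i ∈ s, f i) :=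
  Finset.sum_induction f _ (fun _ _ => NonnegFrom.add) (NonnegFrom.zero n) hf

variable [AddCommMonoid Γ] [IsOrderedCancelAddMonoid Γ]

theorem NonnegFrom.mul {a b : Γ} {f g : HahnSeries Γ R} (hf : NonnegFrom a f)
    (hg : NonnegFrom b g) : NonnegFrom (a + b) (f * g) :=
  ⟨fun i => by
    rw [coeff_mul]
    exact Finset.sum_nonneg fun _ _ => mul_nonneg (hf.1 _) (hg.1 _),
    by rw [WithTop.coe_add]; exact (add_le_add hf.2 hg.2).trans orderTop_add_le_mul⟩

theorem NonnegFrom.coeff_pow {V : PowerSeries (HahnSeries Γ R)} {a : Γ} {n : ℕ}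
    (hV : ∀ j ≤ n, NonnegFrom (j • a) (PowerSeries.coeff j V)) (q : ℕ) {m : ℕ}
    (hm : m ≤ n) : NonnegFrom (m • a) (PowerSeries.coeff m (V ^ q)) := by
  induction q generalizing m with
  | zero =>
    rw [pow_zero, PowerSeries.coeff_one]
    split_ifs with hm0
    · simpa only [hm0, zero_nsmul] using NonnegFrom.one
    · exact NonnegFrom.zero _
  | succ q ih =>
    rw [pow_succ', PowerSeries.coeff_mul]
    refine NonnegFrom.sum fun ij hij => ?_
    rw [Finset.HasAntidiagonal.mem_antidiagonal] at hij
    have := (hV ij.1 (by omega)).mul (ih (m := ij.2) (by omega))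
    rwa [← add_nsmul, hij] at this

end NonnegFrom

theorem NonnegFrom.ofPowerSeries {R : Type*} [Semiring R] [PartialOrder R]
    {φ : PowerSeries R} (hφ : ∀ s, 0 ≤ PowerSeries.coeff s φ) :
    NonnegFrom 0 (ofPowerSeries ℤ R φ) := by
  refine ⟨fun i => ?_, le_orderTop_iff_forall.mpr fun i hi => ?_⟩ <;>
    rw [PowerSeries.coeff_coe]
  · split_ifs
    exacts [le_rfl, hφ _]
  · exact if_pos (WithTop.coe_lt_coe.mp hi)

end HahnSeries

open PowerSeries
open HahnSeries hiding C coeff mk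

section MajorantEquation

variable (σ : ℝ) (r : ℕ) (h : ℕ → ℝ)

noncomputable def majorantLinearPart : LaurentSeries ℝ :=
  σ • single (1 : ℤ) (1 : ℝ) ^ r - single (1 : ℤ) (1 : ℝ) ^ (r + 1) * ofPowerSeries ℤ ℝ (mk h)

theorem majorantLinearPart_eq :
    majorantLinearPart σ r h =
      single (r : ℤ) 1 * ofPowerSeries ℤ ℝ (PowerSeries.C σ - X * mk h) := by
  rw [majorantLinearPart, map_sub, map_mul, ofPowerSeries_C, ofPowerSeries_X, mul_sub,
    single_pow, single_pow, ← mul_assoc, single_mul_single, mul_comm _ (HahnSeries.C σ),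
    C_mul_eq_smul]
  simp

theorem inv_mul_majorantLinearPart (hσ : σ ≠ 0) :
    single (-(r : ℤ)) 1 * ofPowerSeries ℤ ℝ (PowerSeries.C σ - X * mk h)⁻¹ *
      majorantLinearPart σ r h = 1 := by
  have hφ : constantCoeff (PowerSeries.C σ - X * mk h) ≠ 0 := by simpa using hσ
  rw [majorantLinearPart_eq, mul_mul_mul_comm, single_mul_single, ← map_mul,
    PowerSeries.inv_mul_cancel _ hφ, map_one, neg_add_cancel, mul_one, mul_one, single_zero_one]

theorem majorantLinearPart_inv_nonnegFrom (hσ : 0 < σ) (hh : ∀ s, 0 ≤ h s) :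
    NonnegFrom (-(r : ℤ)) (majorantLinearPart σ r h)⁻¹ := by
  have hconst : 0 < constantCoeff (PowerSeries.C σ - X * mk h) := by simpa using hσ
  have hcoeff : ∀ n, n ≠ 0 → coeff n (PowerSeries.C σ - X * mk h) ≤ 0 := by
    intro n hn
    obtain ⟨m, rfl⟩ := Nat.exists_eq_succ_of_ne_zero hn
    simpa [coeff_C] using hh m
  rw [inv_eq_of_mul_eq_one_left (inv_mul_majorantLinearPart σ r h hσ.ne')]
  simpa only [add_zero] using (NonnegFrom.single zero_le_one).mul
    (NonnegFrom.ofPowerSeries (coeff_inv_nonneg hconst hcoeff))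

theorem majorant_coeff_eq_iff (hσ : σ ≠ 0) (V F : LaurentSeries ℝ) :
    σ • (single (1 : ℤ) (1 : ℝ) ^ r * V) =
        single (1 : ℤ) (1 : ℝ) ^ (r + 1) * ofPowerSeries ℤ ℝ (mk h) * V + F ↔
      V = (majorantLinearPart σ r h)⁻¹ * F := by
  rw [eq_inv_mul_iff_mul_eq₀ (right_ne_zero_of_mul_eq_one (inv_mul_majorantLinearPart σ r h hσ)),
    majorantLinearPart, sub_mul, sub_eq_iff_eq_add', ← C_mul_eq_smul, ← C_mul_eq_smul,
    mul_assoc (HahnSeries.C σ)]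

noncomputable def majorantNonlinearTerm (β : ℕ → ℕ → ℕ → ℝ) (C : ℕ → LaurentSeries ℝ) (k : ℕ) :
    LaurentSeries ℝ :=
  if k = 0 then 0 else
    ∑ p ∈ Finset.range k, ∑ q ∈ Finset.range k,
      ofPowerSeries ℤ ℝ (mk fun s => β s p q) * coeff (k - 1 - p) (mk C ^ q)

theorem majorantNonlinearTerm_congr (β : ℕ → ℕ → ℕ → ℝ) {C C' : ℕ → LaurentSeries ℝ} {k : ℕ}
    (hCC' : ∀ j < k, C j = C' j) : majorantNonlinearTerm β C k = majorantNonlinearTerm β C' k := by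
  unfold majorantNonlinearTerm
  split_ifs with hk
  · rfl
  refine Finset.sum_congr rfl fun p _ => Finset.sum_congr rfl fun q _ => ?_
  rw [coeff_pow_congr (g := mk C') (fun j hj => by rw [coeff_mk, coeff_mk, hCC' j (by omega)])]

theorem majorantNonlinearTerm_nonnegFrom {β : ℕ → ℕ → ℕ → ℝ} (hβ : ∀ s p q, 0 ≤ β s p q)
    {a : ℤ} (ha : a ≤ 0) {C : ℕ → LaurentSeries ℝ} {k : ℕ}
    (hC : ∀ j ≤ k, NonnegFrom (j • a) (C j)) :
    NonnegFrom (k • a) (majorantNonlinearTerm β C (k + 1)) := by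
  rw [majorantNonlinearTerm, if_neg k.succ_ne_zero]
  refine NonnegFrom.sum fun p hp => NonnegFrom.sum fun q _ => ?_
  rw [Finset.mem_range] at hp
  have hB : NonnegFrom 0 (ofPowerSeries ℤ ℝ (mk fun s => β s p q)) :=
    NonnegFrom.ofPowerSeries fun s => by simpa only [coeff_mk] using hβ s p q
  have hV := NonnegFrom.coeff_pow (V := mk C) (fun j hj => by simpa only [coeff_mk] using hC j hj)
    q (m := k + 1 - 1 - p) (by omega)
  exact (hB.mul hV).mono (by rw [zero_add]; exact nsmul_le_nsmul_left_of_nonpos ha (by omega))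

theorem solvesMajorantEquation_iff (hσ : σ ≠ 0) {β : ℕ → ℕ → ℕ → ℝ}
    {C : ℕ → LaurentSeries ℝ} :
    SolvesMajorantEquation σ r h β C ↔
      ∀ k, C k = (majorantLinearPart σ r h)⁻¹ * majorantNonlinearTerm β C k := by
  refine ⟨fun hC k => ?_, fun hC => ⟨?_, fun k => ?_⟩⟩
  · exact (majorant_coeff_eq_iff σ r h hσ (C k) _).mp (hC.2 k)
  · rw [hC 0, majorantNonlinearTerm, if_pos rfl, mul_zero]
  · exact (majorant_coeff_eq_iff σ r h hσ (C k) (majorantNonlinearTerm β C k)).mpr (hC k)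

theorem existsUnique_solvesMajorantEquation (β : ℕ → ℕ → ℕ → ℝ) (hσ : σ ≠ 0) :
    ∃! C, SolvesMajorantEquation σ r h β C := by
  simp only [solvesMajorantEquation_iff σ r h hσ]
  exact existsUnique_eq_of_causal _ fun k C C' hCC' => by
    rw [majorantNonlinearTerm_congr β hCC']

theorem SolvesMajorantEquation.nonnegFrom (hσ : 0 < σ) (hh : ∀ s, 0 ≤ h s)
    {β : ℕ → ℕ → ℕ → ℝ} (hβ : ∀ s p q, 0 ≤ β s p q) {C : ℕ → LaurentSeries ℝ}
    (hC : SolvesMajorantEquation σ r h β C) (k : ℕ) : NonnegFrom (k • -(r : ℤ)) (C k) := by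
  have hrec := (solvesMajorantEquation_iff σ r h hσ.ne').mp hC
  induction k using Nat.strong_induction_on with
  | _ k ih =>
    rw [hrec k]
    cases k with
    | zero =>
      rw [majorantNonlinearTerm, if_pos rfl, mul_zero]
      exact NonnegFrom.zero _
    | succ k =>
      rw [succ_nsmul']
      exact (majorantLinearPart_inv_nonnegFrom σ r h hσ hh).mul
        (majorantNonlinearTerm_nonnegFrom hβ (by simp) fun j hj => ih j (by omega))

end MajorantEquation

/-- Existence, uniqueness and nonnegativity for the majorant equation
`σ t^r V = t^{r+1} ĥ(t) V + x M̃(t, x, V)`: if `σ > 0`, all `h_s ≥ 0` and all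
`β_{spq} ≥ 0`, then there is a unique sequence `(C_k)_{k ≥ 1}` of formal Laurent
series in `t` over `ℝ` solving the equation; moreover each `C_k` has order at least
`-kr` and all of its coefficients are nonnegative. -/
theorem majorant_equation_existence_uniqueness_nonnegativity
    (σ : ℝ) (hσ : 0 < σ) (r : ℕ) (h : ℕ → ℝ) (hh : ∀ s : ℕ, 0 ≤ h s)
    (β : ℕ → ℕ → ℕ → ℝ) (hβ : ∀ s p q : ℕ, 0 ≤ β s p q) :
    (∃! C : ℕ → LaurentSeries ℝ, SolvesMajorantEquation σ r h β C) ∧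
    (∀ C : ℕ → LaurentSeries ℝ, SolvesMajorantEquation σ r h β C →
      ∀ k : ℕ, 1 ≤ k →
        (∀ ℓ : ℤ, ℓ < -(k * r : ℤ) → (C k).coeff ℓ = 0) ∧
        (∀ ℓ : ℤ, 0 ≤ (C k).coeff ℓ)) := by
  refine ⟨existsUnique_solvesMajorantEquation σ r h β hσ.ne', fun C hC k _ => ?_⟩
  obtain ⟨hnonneg, horder⟩ := hC.nonnegFrom σ r h hσ hh hβ k
  refine ⟨fun ℓ hℓ => coeff_eq_zero_of_lt_orderTop (lt_of_lt_of_le ?_ horder), hnonneg⟩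
  rw [smul_neg, nsmul_eq_mul]
  exact_mod_cast hℓ
end
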